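/- Let ρ > 1 and let f be analytic inside and on the Bernstein ellipse E_ρ. Define H(x) = (1/(2πi)) ∮_{|u|=ρ} f(½(u + u^{-1})) (1 − u^{-2})/(u − x) du for |x| < ρ. Then H is analytic on the disk {x : |x| < ρ}, and for every k ≥ 0 the k-th Taylor coefficient of H at 0 equals the k-th Chebyshev coefficient of the second kind of f: H^{(k)}(0)/k! = b_k. -/

import Mathlib

/-!
`H` is the Cauchy integral over `|u| = ρ` of `g(u) = f(½(u + u⁻¹))(1 - u⁻²)`, so its `k`-th
Taylor coefficient is `(2πi)⁻¹ ∮ g(u) u⁻ᵏ⁻¹ du`. Since `g` is holomorphic on the closed annulus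
`1 ≤ |u| ≤ ρ`, the contour may be shrunk to the unit circle. There, pairing `u = e^{iθ}` with
`u⁻¹ = e^{-iθ}` turns the integral into `4i ∫₀^π f(cos θ) sin θ sin((k+1)θ) dθ`, and the
substitution `x = cos θ`, with `√(1 - x²) U_k(x) = sin((k+1)θ)`, identifies this with `2πi b_k`.
-/

open Complex Real MeasureTheory Polynomial

noncomputable section

/-- The point ½(u + u⁻¹) for u = r·e^{iθ}. -/
def joukowski (r θ : ℝ) : ℂ :=
  ((r : ℂ) * Complex.exp (θ * Complex.I) +
    ((r : ℂ) * Complex.exp (θ * Complex.I))⁻¹) / 2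

/-- The Bernstein ellipse E_ρ (the curve). -/
def bernsteinEllipse (ρ : ℝ) : Set ℂ := {z | ∃ θ : ℝ, z = joukowski ρ θ}

/-- The closed interior D̄_ρ of the Bernstein ellipse. -/
def bernsteinDisk (ρ : ℝ) : Set ℂ :=
  {z | ∃ r θ : ℝ, 1 ≤ r ∧ r ≤ ρ ∧ z = joukowski r θ}

/-- `f` is analytic inside and on the Bernstein ellipse `E_ρ`:
analytic on an open set containing the closed interior `D̄_ρ`. -/
def AnalyticOnBernstein (f : ℂ → ℂ) (ρ : ℝ) : Prop :=
  ∃ U : Set ℂ, IsOpen U ∧ bernsteinDisk ρ ⊆ U ∧ ∀ z ∈ U, AnalyticAt ℂ f z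

/-- The n-th Chebyshev coefficient of the first kind of f:
aₙ = (2/π) ∫_{-1}^1 f(x) Tₙ(x)/√(1-x²) dx. -/
def chebCoeffT (f : ℂ → ℂ) (n : ℕ) : ℂ :=
  (2 / π) * ∫ x in (-1:ℝ)..1,
    f x * ((Polynomial.Chebyshev.T ℝ n).eval x / Real.sqrt (1 - x ^ 2) : ℝ)

/-- The n-th Chebyshev coefficient of the second kind of f:
bₙ = (2/π) ∫_{-1}^1 √(1-x²) f(x) Uₙ(x) dx. -/
def chebCoeffU (f : ℂ → ℂ) (n : ℕ) : ℂ :=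
  (2 / π) * ∫ x in (-1:ℝ)..1,
    f x * ((Real.sqrt (1 - x ^ 2) * (Polynomial.Chebyshev.U ℝ n).eval x : ℝ))

/-- The m-point trapezoidal approximation aₙ(m,ρ) of the contour formula for aₙ. -/
def trapT (f : ℂ → ℂ) (ρ : ℝ) (n m : ℕ) : ℂ :=
  (2 / (m * ρ ^ n)) * ∑ j ∈ Finset.range m,
    f (joukowski ρ (2 * π * j / m)) * Complex.exp (-(2 * π * j * n / m) * Complex.I)

/-- The m-point trapezoidal approximation bₙ(m,ρ) of the contour formula for bₙ. -/
def trapU (f : ℂ → ℂ) (ρ : ℝ) (n m : ℕ) : ℂ :=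
  (1 / (m * ρ ^ n)) * ∑ j ∈ Finset.range m,
    f (joukowski ρ (2 * π * j / m)) *
      (1 - (ρ:ℂ)⁻¹ ^ 2 * Complex.exp (-(4 * π * j / m) * Complex.I)) *
      Complex.exp (-(2 * π * j * n / m) * Complex.I)

/-- The supremum norm ‖g‖_{E_ρ} of g on the Bernstein ellipse E_ρ. -/
def ellipseNorm (g : ℂ → ℂ) (ρ : ℝ) : ℝ :=
  sSup ((fun z => ‖g z‖) '' bernsteinEllipse ρ)

/-- The polynomial s(z) = η₀/2 + ∑_{k=1}^{m-1} ηₖ Tₖ(z) of degree ≤ m−1 in Chebyshev form. -/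
def chebPoly (η : ℕ → ℂ) (m : ℕ) (z : ℂ) : ℂ :=
  η 0 / 2 + ∑ k ∈ Finset.Icc 1 (m - 1), η k * (Polynomial.Chebyshev.T ℂ k).eval z

/-- M(ρ) = (1/π) ∫₀^{2π} |f(½(ρe^{iθ}+(ρe^{iθ})⁻¹))| dθ. -/
def Mfun (f : ℂ → ℂ) (ρ : ℝ) : ℝ :=
  (1 / π) * ∫ θ in (0:ℝ)..(2 * π), ‖f (joukowski ρ θ)‖

/-- H(x) = (1/(2πi)) ∮_{|u|=ρ} f(½(u+u⁻¹))(1−u⁻²)/(u−x) du. -/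
def Hsecond (f : ℂ → ℂ) (ρ : ℝ) (x : ℂ) : ℂ :=
  (1 / (2 * (π : ℂ) * Complex.I)) *
    ∮ u in C(0, ρ), f ((u + u⁻¹) / 2) * (1 - u⁻¹ ^ 2) / (u - x)

theorem HasFPowerSeriesOnBall.iteratedDeriv_div_factorial {𝕜 : Type*}
    [NontriviallyNormedField 𝕜] [CompleteSpace 𝕜] [CharZero 𝕜] {f : 𝕜 → 𝕜}
    {p : FormalMultilinearSeries 𝕜 𝕜 𝕜} {x : 𝕜} {r : ENNReal} (h : HasFPowerSeriesOnBall f p x r)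
    (n : ℕ) :
    iteratedDeriv n f x / n.factorial = p n (fun _ => 1) := by
  rw [iteratedDeriv_eq_iteratedFDeriv, ← h.factorial_smul, nsmul_eq_mul,
    mul_div_cancel_left₀ _ (Nat.cast_ne_zero.mpr n.factorial_ne_zero)]

theorem cauchyPowerSeries_zero_apply_one (g : ℂ → ℂ) (R : ℝ) (n : ℕ) :
    (cauchyPowerSeries g 0 R n fun _ => 1) =
      (2 * π * I : ℂ)⁻¹ * ∮ z in C(0, R), g z * z⁻¹ ^ (n + 1) := by
  rw [cauchyPowerSeries_apply, smul_eq_mul]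
  congr 2 with z
  simp only [sub_zero, smul_eq_mul, one_div, inv_pow]
  ring

theorem circleIntegral_eq_of_differentiableAt_closedAnnulus {g : ℂ → ℂ} {r R : ℝ}
    (hr : 0 < r) (hrR : r ≤ R) (hg : ∀ z : ℂ, r ≤ ‖z‖ → ‖z‖ ≤ R → DifferentiableAt ℂ g z) :
    (∮ z in C(0, R), g z) = ∮ z in C(0, r), g z := by
  refine circleIntegral_eq_of_differentiable_on_annulus_off_countable hr hrR Set.countable_empty
    (fun z hz => ?_) (fun z hz => ?_)
  · simp only [Set.mem_sdiff, Metric.mem_closedBall, Metric.mem_ball, dist_zero_right,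
      not_lt] at hz
    exact (hg z hz.2 hz.1).continuousAt.continuousWithinAt
  · simp only [Set.sdiff_empty, Set.mem_sdiff, Metric.mem_closedBall, Metric.mem_ball,
      dist_zero_right, not_le] at hz
    exact hg z hz.2.le hz.1.le

theorem intervalIntegral.integral_zero_two_mul_eq_integral_add_reflect {E : Type*}
    [NormedAddCommGroup E] [NormedSpace ℝ E] {F : ℝ → E} {a : ℝ}
    (hF : IntervalIntegrable F volume 0 (2 * a)) :
    ∫ x in 0..2 * a, F x = ∫ x in 0..a, (F x + F (2 * a - x)) := by
  have ha : a ∈ Set.uIcc 0 (2 * a) := by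
    rw [Set.mem_uIcc]
    rcases le_total 0 a with h | h
    exacts [Or.inl ⟨h, by linarith⟩, Or.inr ⟨by linarith, h⟩]
  have hF₁ : IntervalIntegrable F volume 0 a :=
    hF.mono_set (Set.uIcc_subset_uIcc Set.left_mem_uIcc ha)
  have hF₂ : IntervalIntegrable F volume a (2 * a) :=
    hF.mono_set (Set.uIcc_subset_uIcc ha Set.right_mem_uIcc)
  have hF₂' : IntervalIntegrable (fun x => F (2 * a - x)) volume 0 a := by
    simpa [two_mul] using hF₂.symm.comp_sub_left (2 * a)
  rw [intervalIntegral.integral_add hF₁ hF₂', intervalIntegral.integral_comp_sub_left,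
    ← intervalIntegral.integral_add_adjacent_intervals hF₁ hF₂]
  ring_nf

theorem intervalIntegral.integral_neg_one_one_eq_integral_sin_smul_comp_cos {E : Type*}
    [NormedAddCommGroup E] [NormedSpace ℝ E] [CompleteSpace E] (G : ℝ → E) :
    ∫ x in (-1 : ℝ)..1, G x = ∫ θ in 0..π, Real.sin θ • G (Real.cos θ) := by
  have h := intervalIntegral.integral_deriv_smul_comp_of_deriv_nonpos (g := G)
    (a := 0) (b := π) Real.continuous_cos.continuousOn (fun θ _ => Real.hasDerivAt_cos θ)
    (fun θ hθ => by
      rw [min_eq_left Real.pi_pos.le, max_eq_right Real.pi_pos.le] at hθ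
      exact neg_nonpos.mpr (Real.sin_nonneg_of_nonneg_of_le_pi hθ.1.le hθ.2.le))
  rw [Real.cos_zero, Real.cos_pi, intervalIntegral.integral_symm (-1) 1] at h
  simp only [neg_smul, Function.comp_apply, intervalIntegral.integral_neg, neg_inj] at h
  exact h.symm

theorem exp_mul_I_pow_sub_inv_pow (θ : ℝ) (n : ℕ) :
    exp (θ * I) ^ n - (exp (θ * I))⁻¹ ^ n = 2 * I * Real.sin (n * θ) := by
  rw [← Complex.exp_nat_mul, inv_pow, ← Complex.exp_nat_mul, ← Complex.exp_neg, ofReal_sin,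
    Complex.sin]
  push_cast
  ring_nf
  rw [I_sq]
  ring

theorem exp_mul_I_add_inv_div_two (θ : ℝ) :
    (exp (θ * I) + (exp (θ * I))⁻¹) / 2 = Real.cos θ := by
  rw [← Complex.exp_neg, ofReal_cos, Complex.cos]
  ring_nf

theorem joukowski_mem_bernsteinDisk {ρ : ℝ} {u : ℂ} (h1 : 1 ≤ ‖u‖) (h2 : ‖u‖ ≤ ρ) :
    (u + u⁻¹) / 2 ∈ bernsteinDisk ρ :=
  ⟨‖u‖, arg u, h1, h2, by rw [joukowski, norm_mul_exp_arg_mul_I]⟩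

def secondKindIntegrand (f : ℂ → ℂ) (u : ℂ) : ℂ := f ((u + u⁻¹) / 2) * (1 - u⁻¹ ^ 2)

theorem AnalyticOnBernstein.differentiableAt_secondKindIntegrand {f : ℂ → ℂ} {ρ : ℝ}
    (hf : AnalyticOnBernstein f ρ) {u : ℂ} (h1 : 1 ≤ ‖u‖) (h2 : ‖u‖ ≤ ρ) :
    DifferentiableAt ℂ (secondKindIntegrand f) u := by
  obtain ⟨U, -, hDU, hfU⟩ := hf
  have hu : u ≠ 0 := norm_pos_iff.mp (one_pos.trans_le h1)
  have hjouk : DifferentiableAt ℂ (fun u : ℂ => (u + u⁻¹) / 2) u :=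
    (differentiableAt_id.add (differentiableAt_inv hu)).div_const 2
  exact ((hfU _ (hDU (joukowski_mem_bernsteinDisk h1 h2))).differentiableAt.comp u hjouk).mul
    ((differentiableAt_const _).sub ((differentiableAt_inv hu).pow 2))

theorem Hsecond_eq_cauchyIntegral (f : ℂ → ℂ) (ρ : ℝ) :
    Hsecond f ρ =
      fun w => (2 * π * I : ℂ)⁻¹ • ∮ z in C(0, ρ), (z - w)⁻¹ • secondKindIntegrand f z := by
  ext w
  rw [Hsecond, one_div, smul_eq_mul]
  congr 2 with z
  rw [secondKindIntegrand, smul_eq_mul]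
  ring

theorem mul_secondKindIntegrand_add_inv (f : ℂ → ℂ) (n : ℕ) {u : ℂ} (hu : u ≠ 0) :
    u * (secondKindIntegrand f u * u⁻¹ ^ (n + 1)) +
        u⁻¹ * (secondKindIntegrand f u⁻¹ * u⁻¹⁻¹ ^ (n + 1)) =
      f ((u + u⁻¹) / 2) * ((u - u⁻¹) * (u⁻¹ ^ (n + 1) - u ^ (n + 1))) := by
  rw [secondKindIntegrand, secondKindIntegrand, inv_inv, add_comm u⁻¹ u]
  field_simp
  ring

theorem circleIntegral_zero_one_eq_integral_add_inv {h : ℂ → ℂ} (hh : CircleIntegrable h 0 1) :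
    (∮ z in C(0, 1), h z) =
      ∫ θ in 0..π,
        I * (exp (θ * I) * h (exp (θ * I)) + (exp (θ * I))⁻¹ * h (exp (θ * I))⁻¹) := by
  rw [circleIntegral, intervalIntegral.integral_zero_two_mul_eq_integral_add_reflect
    (F := fun θ => deriv (circleMap 0 1) θ • h (circleMap 0 1 θ)) (a := π) hh.out]
  refine intervalIntegral.integral_congr fun θ _ => ?_
  have hreflect : exp (↑(2 * π - θ) * I) = (exp (θ * I))⁻¹ := by
    rw [← Complex.exp_neg, ofReal_sub, sub_mul, Complex.exp_sub, ofReal_mul, ofReal_ofNat,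
      exp_two_pi_mul_I, one_div, Complex.exp_neg]
  simp only [deriv_circleMap, circleMap_zero, ofReal_one, one_mul, smul_eq_mul, hreflect]
  ring

theorem circleIntegral_secondKindIntegrand_zero_one (f : ℂ → ℂ) (n : ℕ)
    (hint : CircleIntegrable (fun z => secondKindIntegrand f z * z⁻¹ ^ (n + 1)) 0 1) :
    (∮ z in C(0, 1), secondKindIntegrand f z * z⁻¹ ^ (n + 1)) =
      4 * I * ∫ θ in 0..π, f (Real.cos θ) * (Real.sin θ * Real.sin ((n + 1) * θ)) := by
  rw [circleIntegral_zero_one_eq_integral_add_inv hint, ← intervalIntegral.integral_const_mul]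
  refine intervalIntegral.integral_congr fun θ _ => ?_
  have hsin₁ := exp_mul_I_pow_sub_inv_pow θ 1
  have hsin₂ := exp_mul_I_pow_sub_inv_pow θ (n + 1)
  simp only [pow_one, Nat.cast_one, one_mul] at hsin₁
  simp only [Nat.cast_add, Nat.cast_one] at hsin₂
  rw [mul_secondKindIntegrand_add_inv f n (exp_ne_zero _), exp_mul_I_add_inv_div_two, hsin₁,
    ← neg_sub, hsin₂]
  linear_combination (-4 * I * f (Real.cos θ) * Real.sin θ * Real.sin ((n + 1) * θ)) * I_mul_I

theorem chebCoeffU_eq_integral_cos (f : ℂ → ℂ) (n : ℕ) :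
    chebCoeffU f n =
      2 / π * ∫ θ in 0..π, f (Real.cos θ) * (Real.sin θ * Real.sin ((n + 1) * θ)) := by
  rw [chebCoeffU, intervalIntegral.integral_neg_one_one_eq_integral_sin_smul_comp_cos]
  congr 1
  refine intervalIntegral.integral_congr fun θ hθ => ?_
  rw [Set.uIcc_of_le Real.pi_pos.le] at hθ
  have hU := Polynomial.Chebyshev.U_real_cos θ n
  push_cast at hU
  simp only [real_smul]
  rw [← Real.sin_eq_sqrt_one_sub_cos_sq hθ.1 hθ.2, mul_comm (Real.sin θ) (Polynomial.eval _ _),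
    hU]
  ring

/-- the Chebyshev coefficients of the second kind of f are the
Taylor coefficients at 0 of the function H, which is analytic on |x| < ρ. -/
theorem chebyshev_coeffs_are_taylor_coeffs_second_kind
    (ρ : ℝ) (hρ : 1 < ρ) (f : ℂ → ℂ) (hf : AnalyticOnBernstein f ρ) :
    (∀ x ∈ Metric.ball (0 : ℂ) ρ, AnalyticAt ℂ (Hsecond f ρ) x) ∧
    ∀ k : ℕ, iteratedDeriv k (Hsecond f ρ) 0 / (k.factorial : ℂ) = chebCoeffU f k := by
  lift ρ to NNReal using zero_le_one.trans hρ.le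
  have hg (z : ℂ) (h1 : 1 ≤ ‖z‖) (h2 : ‖z‖ ≤ ρ) :
      DifferentiableAt ℂ (secondKindIntegrand f) z :=
    hf.differentiableAt_secondKindIntegrand h1 h2
  have hgk (k : ℕ) (z : ℂ) (h1 : 1 ≤ ‖z‖) (h2 : ‖z‖ ≤ ρ) :
      DifferentiableAt ℂ (fun z => secondKindIntegrand f z * z⁻¹ ^ (k + 1)) z :=
    (hg z h1 h2).mul ((differentiableAt_inv (norm_pos_iff.mp (one_pos.trans_le h1))).pow _)
  have hintegrable {r : ℝ} (hr1 : 1 ≤ r) (hrρ : r ≤ ρ) {g : ℂ → ℂ}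
      (hdiff : ∀ z : ℂ, 1 ≤ ‖z‖ → ‖z‖ ≤ ρ → DifferentiableAt ℂ g z) : CircleIntegrable g 0 r :=
    ContinuousOn.circleIntegrable (zero_le_one.trans hr1) fun z hz => by
      rw [mem_sphere_zero_iff_norm] at hz
      exact (hdiff z (hz ▸ hr1) (hz ▸ hrρ)).continuousAt.continuousWithinAt
  have hps :
      HasFPowerSeriesOnBall (Hsecond f ρ) (cauchyPowerSeries (secondKindIntegrand f) 0 ρ) 0 ρ := by
    rw [Hsecond_eq_cauchyIntegral]
    exact hasFPowerSeriesOn_cauchy_integral (hintegrable hρ.le le_rfl hg) (zero_lt_one.trans hρ)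
  refine ⟨fun x hx => hps.analyticAt_of_mem (by rwa [Metric.eball_coe]), fun k => ?_⟩
  rw [hps.iteratedDeriv_div_factorial, cauchyPowerSeries_zero_apply_one,
    circleIntegral_eq_of_differentiableAt_closedAnnulus one_pos hρ.le (hgk k),
    circleIntegral_secondKindIntegrand_zero_one f k (hintegrable le_rfl hρ.le (hgk k)),
    chebCoeffU_eq_integral_cos]
  field_simp
  ring
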